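/- There are infinitely many positive integers n such that the n × n grid does not admit a perfect game of PackIt!. -/

import Mathlib

/-- The `k`-th triangular number `T_k = k(k+1)/2`. -/
def tri (k : ℕ) : ℕ := k * (k + 1) / 2

/-- `tau r` is the largest `k` such that `T_k ≤ r`. -/
def tau (r : ℕ) : ℕ := Nat.findGreatest (fun k => tri k ≤ r) r

/-- The gap `γ(m,n) = m·n − T_{τ(m·n)}`. -/
def gap (m n : ℕ) : ℕ := m * n - tri (tau (m * n))

/-- `P(m,n)`: the set of primes `p` with `n < p ≤ K(m,n) = τ(m·n)`. -/
def primeSet (m n : ℕ) : Finset ℕ := (Finset.Ioc n (tau (m * n))).filter Nat.Prime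

/-- The cells occupied by an axis-aligned rectangle with top-left corner
`pos` and dimensions `dim` (height, width). -/
def rectCells (pos dim : ℕ × ℕ) : Finset (ℕ × ℕ) :=
  Finset.Ico pos.1 (pos.1 + dim.1) ×ˢ Finset.Ico pos.2 (pos.2 + dim.2)

/-- A perfect game of PackIt! on the `m × n` grid: a finite sequence of
axis-aligned rectangles, placed at turns `1, …, K`, such that the rectangle
placed at turn `t` has area `t` or `t+1`, the rectangles are pairwise
disjoint, and together they cover all `m·n` cells of the grid. -/
structure PerfectPackItGame (m n : ℕ) where
  K : ℕ
  pos : ℕ → ℕ × ℕ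
  dim : ℕ → ℕ × ℕ
  area_valid : ∀ t ∈ Finset.Icc 1 K,
    (dim t).1 * (dim t).2 = t ∨ (dim t).1 * (dim t).2 = t + 1
  pairwise_disjoint : ∀ t₁ ∈ Finset.Icc 1 K, ∀ t₂ ∈ Finset.Icc 1 K, t₁ ≠ t₂ →
    Disjoint (rectCells (pos t₁) (dim t₁)) (rectCells (pos t₂) (dim t₂))
  covers : (Finset.Icc 1 K).biUnion (fun t => rectCells (pos t) (dim t)) =
    Finset.range m ×ˢ Finset.range n

lemma two_tri (k : ℕ) : 2 * tri k = k * (k + 1) := by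
  have h : 2 ∣ k * (k + 1) := (Nat.even_mul_succ_self k).two_dvd
  rw [tri, Nat.mul_div_cancel' h]

lemma card_rectCells (pos dim : ℕ × ℕ) : (rectCells pos dim).card = dim.1 * dim.2 := by
  simp [rectCells]

lemma sum_Icc_id (K : ℕ) : ∑ t ∈ Finset.Icc 1 K, t = tri K := by
  induction K with
  | zero => simp [tri]
  | succ n ih =>
    rw [Finset.sum_Icc_succ_top (by omega), ih]
    have h1 := two_tri n
    have h2 := two_tri (n+1)
    have h3 : (n+1) * (n+1+1) = n * (n+1) + 2*(n+1) := by ring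
    omega

lemma no_game {n k p : ℕ} (hk : tri k = n ^ 2) (hp : p.Prime) (h1 : n < p) (h2 : p ≤ k) :
    IsEmpty (PerfectPackItGame n n) := by
  constructor
  rintro ⟨K, pos, dim, areav, disj, covers⟩
  have hcard : ∑ t ∈ Finset.Icc 1 K, ((dim t).1 * (dim t).2) = n ^ 2 := by
    have h2' := Finset.card_biUnion (s := Finset.Icc 1 K)
      (t := fun t => rectCells (pos t) (dim t)) (fun x hx y hy hxy => disj x hx y hy hxy)
    rw [covers] at h2'
    simp only [Finset.card_product, Finset.card_range] at h2'
    calc ∑ t ∈ Finset.Icc 1 K, ((dim t).1 * (dim t).2)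
        = ∑ t ∈ Finset.Icc 1 K, (rectCells (pos t) (dim t)).card :=
          Finset.sum_congr rfl (fun t _ => (card_rectCells _ _).symm)
      _ = n * n := h2'.symm
      _ = n ^ 2 := (sq n).symm
  have hlow : ∀ t ∈ Finset.Icc 1 K, t ≤ (dim t).1 * (dim t).2 := by
    intro t ht; rcases areav t ht with h | h <;> omega
  have hhigh : ∀ t ∈ Finset.Icc 1 K, (dim t).1 * (dim t).2 ≤ t + 1 := by
    intro t ht; rcases areav t ht with h | h <;> omega
  have hKk : K = k := by
    have hl : tri K ≤ tri k := by
      rw [hk, ← hcard, ← sum_Icc_id]; exact Finset.sum_le_sum hlow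
    have hh : tri k ≤ tri K + K := by
      rw [hk, ← hcard]
      calc ∑ t ∈ Finset.Icc 1 K, ((dim t).1 * (dim t).2) ≤ ∑ t ∈ Finset.Icc 1 K, (t+1) :=
            Finset.sum_le_sum hhigh
        _ = tri K + K := by
            rw [Finset.sum_add_distrib, sum_Icc_id]
            simp [Nat.card_Icc]
    have t1 := two_tri K
    have t2 := two_tri k
    have hle : K ≤ k := by
      by_contra hc
      push_neg at hc
      nlinarith
    have hge : k ≤ K := by
      by_contra hc
      push_neg at hc
      nlinarith
    omega
  subst hKk
  have hmem : p ∈ Finset.Icc 1 K := Finset.mem_Icc.2 ⟨hp.one_lt.le, h2⟩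
  have hareap : (dim p).1 * (dim p).2 = p := by
    by_contra hne
    have : ∑ t ∈ Finset.Icc 1 K, t < ∑ t ∈ Finset.Icc 1 K, ((dim t).1 * (dim t).2) :=
      Finset.sum_lt_sum hlow ⟨p, hmem, by have := hlow p hmem; omega⟩
    rw [hcard, sum_Icc_id, hk] at this
    omega
  have hsub : rectCells (pos p) (dim p) ⊆ Finset.range n ×ˢ Finset.range n := by
    rw [← covers]; exact Finset.subset_biUnion_of_mem (fun t => rectCells (pos t) (dim t)) hmem
  have hdvd : (dim p).1 ∣ p := ⟨(dim p).2, hareap.symm⟩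
  have hme : ∀ q : ℕ × ℕ, q ∈ rectCells (pos p) (dim p) → q.1 < n ∧ q.2 < n := by
    intro q hq
    have := hsub hq
    simp only [Finset.mem_product, Finset.mem_range] at this
    exact this
  rcases (hp.eq_one_or_self_of_dvd _ hdvd) with hd1 | hd1
  · -- dim = (1, p)
    have hd2 : (dim p).2 = p := by rw [hd1, one_mul] at hareap; exact hareap
    have hcell : ((pos p).1, (pos p).2 + p - 1) ∈ rectCells (pos p) (dim p) := by
      have hp1 := hp.one_lt
      simp only [rectCells, Finset.mem_product, Finset.mem_Ico, hd1, hd2]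
      omega
    have := (hme _ hcell).2
    simp only at this
    omega
  · -- dim = (p, ?)
    have hd2 : (dim p).2 = 1 := by
      rw [hd1] at hareap
      have hpp := hp.pos
      nlinarith
    have hcell : ((pos p).1 + p - 1, (pos p).2) ∈ rectCells (pos p) (dim p) := by
      have hp1 := hp.one_lt
      simp only [rectCells, Finset.mem_product, Finset.mem_Ico, hd1, hd2]
      omega
    have := (hme _ hcell).1
    simp only at this
    omega

/-- Pell-type sequence of pairs (n, k) with k(k+1) = 2n². -/
def pell : ℕ → ℕ × ℕ
  | 0 => (1, 1)
  | j + 1 => (3 * (pell j).1 + 2 * (pell j).2 + 1, 4 * (pell j).1 + 3 * (pell j).2 + 1)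

lemma pell_invariant (j : ℕ) : (pell j).2 * ((pell j).2 + 1) = 2 * (pell j).1 ^ 2 := by
  induction j with
  | zero => simp [pell]
  | succ j ih =>
    rw [pell]
    set n := (pell j).1
    set k := (pell j).2
    simp only
    nlinarith [ih]

lemma pell_tri (j : ℕ) : tri (pell j).2 = (pell j).1 ^ 2 := by
  have h := pell_invariant j
  have h2 := two_tri (pell j).2
  omega

lemma pell_fst_strictMono : StrictMono (fun j => (pell j).1) := by
  apply strictMono_nat_of_lt_succ
  intro j
  show (pell j).1 < 3 * (pell j).1 + 2 * (pell j).2 + 1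
  omega

lemma pell_fst_ge (j : ℕ) : j ≤ (pell j).1 := pell_fst_strictMono.le_apply

lemma pell_fst_pos (j : ℕ) : 0 < (pell j).1 := by
  induction j with
  | zero => simp [pell]
  | succ j ih => rw [pell]; omega

-- k ≥ 1.41 n for n ≥ 119, and k ≤ 2n
lemma pell_k_lb (j : ℕ) (hj : 119 ≤ (pell j).1) : 141 * (pell j).1 ≤ 100 * (pell j).2 := by
  have h := pell_invariant j
  by_contra hc
  push_neg at hc
  nlinarith [h, sq_nonneg ((pell j).1), sq_nonneg ((pell j).2)]

lemma pell_k_ub (j : ℕ) : (pell j).2 ≤ 2 * (pell j).1 := by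
  have h := pell_invariant j
  have h1 := pell_fst_pos j
  nlinarith [h]

open Finset


/-- denominator part of the Chebyshev ratio -/
def Mden (N : ℕ) : ℕ := (N/2).factorial * (N/3).factorial * (N/5).factorial
/-- numerator part -/
def Mnum (N : ℕ) : ℕ := N.factorial * (N/30).factorial
/-- product of primes in (N/6, N] -/
def Qprod (N : ℕ) : ℕ := ∏ p ∈ (Finset.Ioc (N/6) N).filter Nat.Prime, p
/-- product of p^(log_p N) over primes up to N -/
def Wprod (N : ℕ) : ℕ := ∏ p ∈ (Finset.range (N+1)).filter Nat.Prime, p ^ (Nat.log p N)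

lemma fact_legendre {q : ℕ} (hq : q.Prime) {n B : ℕ} (hB : n < B) :
    (Nat.factorial n).factorization q = ∑ i ∈ Finset.Ico 1 B, n / q ^ i := by
  haveI := Fact.mk hq
  rw [Nat.factorization_def _ hq]
  exact padicValNat_factorial (lt_of_le_of_lt (Nat.log_le_self _ _) hB)

lemma div_div_swap (N r q i : ℕ) : (N / r) / q ^ i = (N / q ^ i) / r := by
  rw [Nat.div_div_eq_div_mul, Nat.div_div_eq_div_mul, mul_comm]

lemma Qprod_ne_zero (N : ℕ) : Qprod N ≠ 0 :=
  Finset.prod_ne_zero_iff.2 (fun p hp => (Nat.Prime.pos (Finset.mem_filter.1 hp).2).ne')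

lemma Mden_ne_zero (N : ℕ) : Mden N ≠ 0 := by
  simp [Mden, Nat.factorial_ne_zero]

lemma Mnum_ne_zero (N : ℕ) : Mnum N ≠ 0 := by
  simp [Mnum, Nat.factorial_ne_zero]

lemma Qprod_factorization {N q : ℕ} (hq : q.Prime) :
    (Qprod N).factorization q = if q ∈ (Finset.Ioc (N/6) N).filter Nat.Prime then 1 else 0 := by
  rw [Qprod, Nat.factorization_prod (fun p hp => (Nat.Prime.pos (Finset.mem_filter.1 hp).2).ne')]
  rw [Finset.sum_apply']
  rw [Finset.sum_congr rfl (fun p hp => by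
    rw [(Finset.mem_filter.1 hp).2.factorization, Finsupp.single_apply])]
  simp [Finset.sum_ite_eq']

lemma Wprod_factorization {N q : ℕ} (hq : q.Prime) :
    (Wprod N).factorization q =
      if q ∈ (Finset.range (N+1)).filter Nat.Prime then Nat.log q N else 0 := by
  rw [Wprod, Nat.factorization_prod (fun p hp =>
    pow_ne_zero _ (Nat.Prime.pos (Finset.mem_filter.1 hp).2).ne')]
  rw [Finset.sum_apply']
  rw [Finset.sum_congr rfl (fun p hp => by
    rw [(Finset.mem_filter.1 hp).2.factorization_pow, Finsupp.single_apply])]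
  simp [Finset.sum_ite_eq']


-- the deficiency of the floor-function inequality, per index
def gdef (N q : ℕ) (i : ℕ) : ℕ :=
  (N / q ^ i + N / q ^ i / 30) - (N / q ^ i / 2 + N / q ^ i / 3 + N / q ^ i / 5)

lemma sums_split (N q : ℕ) :
    ∑ i ∈ Finset.Ico 1 (N+1), N / q ^ i + ∑ i ∈ Finset.Ico 1 (N+1), N / q ^ i / 30
    = (∑ i ∈ Finset.Ico 1 (N+1), N / q ^ i / 2 + ∑ i ∈ Finset.Ico 1 (N+1), N / q ^ i / 3
      + ∑ i ∈ Finset.Ico 1 (N+1), N / q ^ i / 5) + ∑ i ∈ Finset.Ico 1 (N+1), gdef N q i := by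
  rw [← Finset.sum_add_distrib, ← Finset.sum_add_distrib, ← Finset.sum_add_distrib,
    ← Finset.sum_add_distrib]
  exact Finset.sum_congr rfl (fun i _ => by simp only [gdef]; omega)

lemma factorization_expand {N q : ℕ} (hq : q.Prime) :
    (Mnum N).factorization q
      = ∑ i ∈ Finset.Ico 1 (N+1), N / q ^ i + ∑ i ∈ Finset.Ico 1 (N+1), N / q ^ i / 30
    ∧ (Mden N).factorization q
      = ∑ i ∈ Finset.Ico 1 (N+1), N / q ^ i / 2 + ∑ i ∈ Finset.Ico 1 (N+1), N / q ^ i / 3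
        + ∑ i ∈ Finset.Ico 1 (N+1), N / q ^ i / 5 := by
  constructor
  · rw [Mnum, Nat.factorization_mul (Nat.factorial_ne_zero _) (Nat.factorial_ne_zero _)]
    simp only [Finsupp.coe_add, Pi.add_apply]
    rw [fact_legendre hq (B := N+1) (Nat.lt_succ_of_le (le_refl N)),
      fact_legendre hq (B := N+1) (Nat.lt_succ_of_le (Nat.div_le_self N 30))]
    simp only [div_div_swap N 30 q]
  · rw [Mden, Nat.factorization_mul (mul_ne_zero (Nat.factorial_ne_zero _) (Nat.factorial_ne_zero _)) (Nat.factorial_ne_zero _),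
      Nat.factorization_mul (Nat.factorial_ne_zero _) (Nat.factorial_ne_zero _)]
    simp only [Finsupp.coe_add, Pi.add_apply]
    rw [fact_legendre hq (B := N+1) (Nat.lt_succ_of_le (Nat.div_le_self N 2)),
      fact_legendre hq (B := N+1) (Nat.lt_succ_of_le (Nat.div_le_self N 3)),
      fact_legendre hq (B := N+1) (Nat.lt_succ_of_le (Nat.div_le_self N 5))]
    simp only [div_div_swap N 2 q, div_div_swap N 3 q, div_div_swap N 5 q]

lemma lemA (N : ℕ) (hN : 1 ≤ N) : Qprod N * Mden N ∣ Mnum N := by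
  rw [← Nat.factorization_le_iff_dvd (mul_ne_zero (Qprod_ne_zero N) (Mden_ne_zero N))
    (Mnum_ne_zero N)]
  intro q
  by_cases hq : q.Prime
  · rw [Nat.factorization_mul (Qprod_ne_zero N) (Mden_ne_zero N)]
    simp only [Finsupp.coe_add, Pi.add_apply]
    obtain ⟨hnum, hden⟩ := factorization_expand (N := N) hq
    rw [hnum, hden, Qprod_factorization hq]
    have hsplit := sums_split N q
    by_cases hmem : q ∈ (Finset.Ioc (N/6) N).filter Nat.Prime
    · simp only [hmem, if_true]
      have hq6 : N / 6 < q ∧ q ≤ N := Finset.mem_Ioc.1 (Finset.mem_filter.1 hmem).1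
      have hF1 : 1 ≤ N / q ∧ N / q ≤ 5 := by
        constructor
        · exact Nat.one_le_div_iff hq.pos |>.2 hq6.2
        · by_contra hc
          push_neg at hc
          have h6 : q * 6 ≤ N := by
            have := (Nat.le_div_iff_mul_le hq.pos).1 (by omega : 6 ≤ N / q)
            omega
          have : q ≤ N / 6 := (Nat.le_div_iff_mul_le (by norm_num)).2 h6
          omega
      have hone : (1:ℕ) ≤ ∑ i ∈ Finset.Ico 1 (N+1), gdef N q i := by
        have h1mem : 1 ∈ Finset.Ico 1 (N+1) := by simp; omega
        calc (1:ℕ) ≤ gdef N q 1 := by simp only [gdef, pow_one]; omega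
          _ ≤ _ := Finset.single_le_sum (f := gdef N q) (fun i _ => Nat.zero_le _) h1mem
      omega
    · simp only [hmem, if_false]
      omega
  · simp [Nat.factorization_eq_zero_of_not_prime _ hq]

lemma lemB (N : ℕ) (hN : 1 ≤ N) : Mnum N ∣ Mden N * Wprod N := by
  have hW : Wprod N ≠ 0 := Finset.prod_ne_zero_iff.2 (fun p hp =>
    pow_ne_zero _ (Nat.Prime.pos (Finset.mem_filter.1 hp).2).ne')
  rw [← Nat.factorization_le_iff_dvd (Mnum_ne_zero N) (mul_ne_zero (Mden_ne_zero N) hW)]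
  intro q
  by_cases hq : q.Prime
  · rw [Nat.factorization_mul (Mden_ne_zero N) hW]
    simp only [Finsupp.coe_add, Pi.add_apply]
    obtain ⟨hnum, hden⟩ := factorization_expand (N := N) hq
    rw [hnum, hden, Wprod_factorization hq]
    have hsplit := sums_split N q
    by_cases hqN : q ≤ N
    · have hmem : q ∈ (Finset.range (N+1)).filter Nat.Prime := by
        simp only [Finset.mem_filter, Finset.mem_range]
        exact ⟨by omega, hq⟩
      simp only [hmem, if_true]
      have hgsum : ∑ i ∈ Finset.Ico 1 (N+1), gdef N q i ≤ Nat.log q N := by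
        have hgle : ∀ i, gdef N q i ≤ 1 := by intro i; simp only [gdef]; omega
        have hgzero : ∀ i, Nat.log q N < i → gdef N q i = 0 := by
          intro i hi
          have hlt : N < q ^ i := by
            calc N < q ^ (Nat.log q N + 1) := Nat.lt_pow_succ_log_self hq.one_lt N
              _ ≤ q ^ i := Nat.pow_le_pow_right hq.pos hi
          have hFi : N / q ^ i = 0 := Nat.div_eq_of_lt hlt
          simp only [gdef, hFi]
        have hsub : Finset.Ico 1 (Nat.log q N + 1) ⊆ Finset.Ico 1 (N+1) := by
          apply Finset.Ico_subset_Ico (le_refl 1)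
          have := Nat.log_le_self q N; omega
        calc ∑ i ∈ Finset.Ico 1 (N+1), gdef N q i
            = ∑ i ∈ Finset.Ico 1 (Nat.log q N + 1), gdef N q i := by
              apply (Finset.sum_subset hsub ?_).symm
              intro i hi hni
              simp only [Finset.mem_Ico] at hi hni
              exact hgzero i (by omega)
          _ ≤ ∑ _i ∈ Finset.Ico 1 (Nat.log q N + 1), 1 :=
              Finset.sum_le_sum (fun i _ => hgle i)
          _ = Nat.log q N := by simp
      omega
    · have hz : ∀ i ∈ Finset.Ico 1 (N+1), N / q ^ i = 0 := by
        intro i hi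
        simp only [Finset.mem_Ico] at hi
        apply Nat.div_eq_of_lt
        calc N < q := by omega
          _ ≤ q ^ i := Nat.le_self_pow (by omega) q
      have h30 : ∀ i ∈ Finset.Ico 1 (N+1), N / q ^ i / 30 = 0 := fun i hi => by rw [hz i hi]
      rw [Finset.sum_congr rfl hz, Finset.sum_congr rfl h30]
      simp
  · simp [Nat.factorization_eq_zero_of_not_prime _ hq]

lemma Wprod_le (N : ℕ) (hN : 1 ≤ N) :
    Wprod N ≤ primorial N * N ^ (Nat.sqrt N + 1) := by
  have step1 : Wprod N ≤ ∏ p ∈ (Finset.range (N+1)).filter Nat.Prime,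
      (p * (if p * p ≤ N then N else 1)) := by
    apply Finset.prod_le_prod' <;> try infer_instance
    intro p hp
    obtain ⟨hpr, hpp⟩ := Finset.mem_filter.1 hp
    have hpN : p ≤ N := by simp at hpr; omega
    have hL1 : 1 ≤ Nat.log p N := by
      rw [Nat.le_log_iff_pow_le hpp.one_lt (by omega)]
      simpa using hpN
    rcases Nat.lt_or_ge (Nat.log p N) 2 with hL | hL
    · have h1 : Nat.log p N = 1 := by omega
      rw [h1, pow_one]
      calc p ≤ p * 1 := by omega
        _ ≤ p * (if p * p ≤ N then N else 1) := by
          apply Nat.mul_le_mul_left; split <;> omega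
    · have hp2 : p * p ≤ N := by
        calc p * p = p ^ 2 := (sq p).symm
          _ ≤ p ^ (Nat.log p N) := Nat.pow_le_pow_right hpp.pos hL
          _ ≤ N := Nat.pow_log_le_self p (by omega)
      simp only [hp2, if_true]
      calc p ^ Nat.log p N = p * p ^ (Nat.log p N - 1) := by
            rw [← pow_succ']; congr 1; omega
        _ ≤ p * N := by
            apply Nat.mul_le_mul_left
            calc p ^ (Nat.log p N - 1) ≤ p ^ (Nat.log p N) :=
                  Nat.pow_le_pow_right hpp.pos (by omega)
              _ ≤ N := Nat.pow_log_le_self p (by omega)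
  have step2 : ∏ p ∈ (Finset.range (N+1)).filter Nat.Prime,
      (p * (if p * p ≤ N then N else 1))
      = primorial N * ∏ p ∈ (Finset.range (N+1)).filter Nat.Prime,
          (if p * p ≤ N then N else 1) := by
    rw [Finset.prod_mul_distrib, primorial]
  have step3 : ∏ p ∈ (Finset.range (N+1)).filter Nat.Prime, (if p * p ≤ N then N else 1)
      ≤ N ^ (Nat.sqrt N + 1) := by
    rw [← Finset.prod_filter]
    have hsub : ((Finset.range (N+1)).filter Nat.Prime).filter (fun p => p * p ≤ N)
        ⊆ Finset.range (Nat.sqrt N + 1) := by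
      intro p hp
      simp only [Finset.mem_filter, Finset.mem_range] at hp ⊢
      have := Nat.le_sqrt.2 hp.2
      omega
    calc ∏ p ∈ ((Finset.range (N+1)).filter Nat.Prime).filter (fun p => p * p ≤ N), N
        = N ^ (((Finset.range (N+1)).filter Nat.Prime).filter (fun p => p * p ≤ N)).card :=
          Finset.prod_const N
      _ ≤ N ^ (Nat.sqrt N + 1) := Nat.pow_le_pow_right (by omega)
          (by simpa using Finset.card_le_card hsub)
  calc Wprod N ≤ _ := step1
    _ = _ := step2
    _ ≤ _ := Nat.mul_le_mul_left _ step3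

lemma primorial_split (N : ℕ) : primorial N = primorial (N/6) * Qprod N := by
  have h : N/6 + (N - N/6) = N := by omega
  conv_lhs => rw [← h]
  rw [_root_.primorial_add]
  congr 1
  unfold Qprod
  apply Finset.prod_congr _ (fun _ _ => rfl)
  ext x
  simp only [Finset.mem_filter, Finset.mem_Ico, Finset.mem_Ioc]
  constructor
  · rintro ⟨⟨h1, h2⟩, h3⟩; exact ⟨⟨by omega, by omega⟩, h3⟩
  · rintro ⟨⟨h1, h2⟩, h3⟩; exact ⟨⟨by omega, by omega⟩, h3⟩

open Real in
/-- Stirling-type bounds for `log m!`. -/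
lemma log_factorial_bounds (m : ℕ) (hm : 1 ≤ m) :
    (m:ℝ) * Real.log m - m + 1 ≤ Real.log (m.factorial) ∧
      Real.log (m.factorial) ≤ (m:ℝ) * Real.log m - m + 1 + Real.log m := by
  induction m with
  | zero => omega
  | succ m ih =>
    rcases Nat.eq_or_lt_of_le hm with h1 | h1
    · simp [← h1]
    · have hm1 : 1 ≤ m := by omega
      obtain ⟨ihl, ihu⟩ := ih hm1
      have hmr : (1:ℝ) ≤ (m:ℝ) := by exact_mod_cast hm1
      have hfac : ((m+1).factorial : ℝ) = ((m:ℝ)+1) * (m.factorial : ℝ) := by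
        rw [Nat.factorial_succ]; push_cast; ring
      have hlog : Real.log ((m+1).factorial) = Real.log ((m:ℝ)+1) + Real.log (m.factorial) := by
        rw [hfac, Real.log_mul (by positivity) (by exact_mod_cast (Nat.factorial_pos m).ne')]
      -- log (1 + 1/m) ≤ 1/m  and  log(1+1/m) ≥ 1/(m+1)
      have hratpos : (0:ℝ) < ((m:ℝ)+1)/m := by positivity
      have hub : Real.log (((m:ℝ)+1)/m) ≤ 1/m := by
        have := Real.log_le_sub_one_of_pos hratpos
        have hmne : (m:ℝ) ≠ 0 := by positivity
        calc Real.log (((m:ℝ)+1)/m) ≤ ((m:ℝ)+1)/m - 1 := this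
          _ = 1/m := by field_simp; ring
      have hlb : 1/((m:ℝ)+1) ≤ Real.log (((m:ℝ)+1)/m) := by
        have hinv : Real.log ((m:ℝ)/((m:ℝ)+1)) ≤ (m:ℝ)/((m:ℝ)+1) - 1 :=
          Real.log_le_sub_one_of_pos (by positivity)
        have : Real.log ((m:ℝ)/((m:ℝ)+1)) = - Real.log (((m:ℝ)+1)/m) := by
          rw [← Real.log_inv]; congr 1; field_simp
        rw [this] at hinv
        have : (m:ℝ)/((m:ℝ)+1) - 1 = -(1/((m:ℝ)+1)) := by field_simp; ring
        rw [this] at hinv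
        linarith
      have hld : Real.log (((m:ℝ)+1)/m) = Real.log ((m:ℝ)+1) - Real.log m :=
        Real.log_div (by positivity) (by positivity)
      rw [hld] at hub hlb
      have hmge : (0:ℝ) ≤ (m:ℝ) := by positivity
      have h1 : (m:ℝ) * (Real.log ((m:ℝ)+1) - Real.log m) ≤ 1 := by
        have := mul_le_mul_of_nonneg_left hub hmge
        have hmne : (m:ℝ) ≠ 0 := by positivity
        calc (m:ℝ) * (Real.log ((m:ℝ)+1) - Real.log m) ≤ (m:ℝ) * (1/m) := this
          _ = 1 := by field_simp
      have h2 : (1:ℝ) ≤ ((m:ℝ)+1) * (Real.log ((m:ℝ)+1) - Real.log m) := by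
        have := mul_le_mul_of_nonneg_left hlb (by positivity : (0:ℝ) ≤ (m:ℝ)+1)
        have hmne : ((m:ℝ)+1) ≠ 0 := by positivity
        calc (1:ℝ) = ((m:ℝ)+1) * (1/((m:ℝ)+1)) := by field_simp
          _ ≤ _ := this
      constructor
      · push_cast
        rw [hlog]
        push_cast
        linarith [h1, ihl]
      · push_cast
        rw [hlog]
        push_cast
        linarith [h2, ihu]

open Real in
/-- comparison of `φ` at the floor with `φ` at the real quotient -/
lemma phi_floor_bounds (N r : ℕ) (hr : 1 ≤ r) (hN : 3 * r ≤ N) :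
    ((N:ℝ)/r) * Real.log ((N:ℝ)/r) - (N:ℝ)/r - Real.log N + 1 ≤ Real.log ((N/r : ℕ).factorial) ∧
    Real.log ((N/r : ℕ).factorial)
      ≤ ((N:ℝ)/r) * Real.log ((N:ℝ)/r) - (N:ℝ)/r + 1 + Real.log N := by
  set m : ℕ := N / r with hm
  have hm3 : 3 ≤ m := by
    rw [hm]; rw [Nat.le_div_iff_mul_le (by omega)]; omega
  have hb : m * r ≤ N ∧ N < (m+1) * r := by
    constructor
    · exact Nat.div_mul_le_self N r
    · have h1 := Nat.div_add_mod N r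
      have h2 : N % r < r := Nat.mod_lt _ (by omega)
      have h3 : (m+1)*r = r * (N/r) + r := by rw [hm]; ring
      omega
  have hrpos : (0:ℝ) < r := by exact_mod_cast hr
  set x : ℝ := (N:ℝ)/r with hx
  have hmx : (m:ℝ) ≤ x := by
    rw [hx, le_div_iff₀ hrpos]
    exact_mod_cast hb.1
  have hxm1 : x < (m:ℝ) + 1 := by
    rw [hx, div_lt_iff₀ hrpos]
    push_cast
    exact_mod_cast hb.2
  have hm3r : (3:ℝ) ≤ (m:ℝ) := by exact_mod_cast hm3
  have hlog3 : (1:ℝ) ≤ Real.log 3 := by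
    rw [Real.le_log_iff_exp_le (by norm_num)]
    exact (lt_of_lt_of_le Real.exp_one_lt_d9 (by norm_num)).le
  have hlogm : (1:ℝ) ≤ Real.log m := by
    calc (1:ℝ) ≤ Real.log 3 := hlog3
      _ ≤ Real.log m := Real.log_le_log (by norm_num) hm3r
  have hxpos : (0:ℝ) < x := by linarith
  have hmpos : (0:ℝ) < (m:ℝ) := by linarith
  -- φ m ≤ φ x
  have hphil : (m:ℝ) * Real.log m - m ≤ x * Real.log x - x := by
    have h1 : Real.log m ≤ Real.log x := Real.log_le_log hmpos hmx
    nlinarith [hmx, hlogm, h1]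
  -- φ x ≤ φ m + log x
  have hphiu : x * Real.log x - x ≤ (m:ℝ) * Real.log m - m + Real.log x := by
    have h2 : Real.log x - Real.log m ≤ x/(m:ℝ) - 1 := by
      rw [← Real.log_div (by positivity) (by positivity)]
      exact Real.log_le_sub_one_of_pos (by positivity)
    have e1 : (m:ℝ) * (Real.log x - Real.log m) ≤ x - m := by
      have hh := mul_le_mul_of_nonneg_left h2 hmpos.le
      have hmne : (m:ℝ) ≠ 0 := by positivity
      calc (m:ℝ) * (Real.log x - Real.log m) ≤ (m:ℝ) * (x/(m:ℝ) - 1) := hh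
        _ = x - m := by field_simp
    have hlx : (0:ℝ) ≤ Real.log x := Real.log_nonneg (by linarith)
    have e2 : (x - (m:ℝ)) * Real.log x ≤ 1 * Real.log x :=
      mul_le_mul_of_nonneg_right (by linarith) hlx
    nlinarith [e1, e2, hlx]
  have hxN : x ≤ (N:ℝ) := by
    rw [hx]
    calc (N:ℝ)/r ≤ (N:ℝ)/1 := by
          apply div_le_div_of_nonneg_left (by positivity) (by norm_num)
          exact_mod_cast hr
      _ = (N:ℝ) := by norm_num
  have hlogxN : Real.log x ≤ Real.log N := Real.log_le_log hxpos hxN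
  have hlogmN : Real.log m ≤ Real.log N := by
    apply Real.log_le_log hmpos
    calc (m:ℝ) ≤ x := hmx
      _ ≤ N := hxN
  obtain ⟨hsl, hsu⟩ := log_factorial_bounds m (by omega)
  constructor
  · calc x * Real.log x - x - Real.log N + 1
        ≤ (m:ℝ) * Real.log m - m + Real.log x - Real.log N + 1 := by linarith [hphiu]
      _ ≤ (m:ℝ) * Real.log m - m + 1 := by linarith [hlogxN]
      _ ≤ Real.log (m.factorial) := hsl
  · calc Real.log (m.factorial) ≤ (m:ℝ) * Real.log m - m + 1 + Real.log m := hsu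
      _ ≤ x * Real.log x - x + 1 + Real.log N := by linarith [hphil, hlogmN]

noncomputable def Aconst : ℝ := (7/15)*Real.log 2 + (3/10)*Real.log 3 + (1/6)*Real.log 5

lemma Aconst_lb : (3:ℝ)/10 ≤ Aconst := by
  have h2 : (0.6931471803:ℝ) < Real.log 2 := Real.log_two_gt_d9
  have h3 : (0:ℝ) ≤ Real.log 3 := Real.log_nonneg (by norm_num)
  have h5 : (0:ℝ) ≤ Real.log 5 := Real.log_nonneg (by norm_num)
  unfold Aconst
  nlinarith

lemma Aconst_nonneg : (0:ℝ) ≤ Aconst := by linarith [Aconst_lb]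

lemma log30 : Real.log 30 = Real.log 2 + Real.log 3 + Real.log 5 := by
  rw [show (30:ℝ) = 2*3*5 by norm_num, Real.log_mul (by norm_num) (by norm_num),
    Real.log_mul (by norm_num) (by norm_num)]

/-- The main-term identity. -/
lemma main_term (n : ℝ) (hn : 0 < n) :
    (n * Real.log n - n) + (n/30 * Real.log (n/30) - n/30)
      - (n/2 * Real.log (n/2) - n/2) - (n/3 * Real.log (n/3) - n/3)
      - (n/5 * Real.log (n/5) - n/5) = Aconst * n := by
  rw [Real.log_div (by positivity) (by norm_num), Real.log_div (by positivity) (by norm_num),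
    Real.log_div (by positivity) (by norm_num), Real.log_div (by positivity) (by norm_num),
    log30]
  unfold Aconst
  ring

lemma log_Mnum (N : ℕ) :
    Real.log (Mnum N) = Real.log (N.factorial) + Real.log ((N/30).factorial) := by
  rw [Mnum]
  push_cast
  rw [Real.log_mul (by exact_mod_cast (Nat.factorial_pos N).ne')
    (by exact_mod_cast (Nat.factorial_pos _).ne')]

lemma log_Mden (N : ℕ) : Real.log (Mden N) =
    Real.log ((N/2).factorial) + Real.log ((N/3).factorial) + Real.log ((N/5).factorial) := by
  rw [Mden]
  push_cast
  rw [Real.log_mul (by positivity) (by exact_mod_cast (Nat.factorial_pos _).ne'),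
    Real.log_mul (by exact_mod_cast (Nat.factorial_pos _).ne')
      (by exact_mod_cast (Nat.factorial_pos _).ne')]

lemma LM_bounds (N : ℕ) (hN : 90 ≤ N) :
    Aconst * N - (5*Real.log N + 1) ≤ Real.log (Mnum N) - Real.log (Mden N) ∧
    Real.log (Mnum N) - Real.log (Mden N) ≤ Aconst * N + (5*Real.log N + 1) := by
  obtain ⟨l1, u1⟩ := log_factorial_bounds N (by omega)
  obtain ⟨l2, u2⟩ := phi_floor_bounds N 2 (by norm_num) (by omega)
  obtain ⟨l3, u3⟩ := phi_floor_bounds N 3 (by norm_num) (by omega)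
  obtain ⟨l5, u5⟩ := phi_floor_bounds N 5 (by norm_num) (by omega)
  obtain ⟨l30, u30⟩ := phi_floor_bounds N 30 (by norm_num) (by omega)
  push_cast at l2 u2 l3 u3 l5 u5 l30 u30
  have hmain := main_term (N:ℝ) (by positivity)
  have hlogN : (0:ℝ) ≤ Real.log N := Real.log_nonneg (by exact_mod_cast (by omega : 1 ≤ N))
  rw [log_Mnum, log_Mden]
  constructor <;> linarith

noncomputable def theta (N : ℕ) : ℝ := Real.log (primorial N)

lemma theta_eq_of_no_prime {n k : ℕ} (hnk : n ≤ k)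
    (h : ∀ p, p.Prime → n < p → ¬ p ≤ k) : theta k = theta n := by
  unfold theta primorial
  congr 1
  norm_cast
  apply Finset.prod_congr _ (fun _ _ => rfl)
  ext p
  simp only [Finset.mem_filter, Finset.mem_range]
  constructor
  · rintro ⟨h1, h2⟩
    refine ⟨?_, h2⟩
    by_contra hc
    exact h p h2 (by omega) (by omega)
  · rintro ⟨h1, h2⟩
    exact ⟨by omega, h2⟩

lemma log_e_ratio {N : ℕ} (hN : 90 ≤ N) :
    1 ≤ Real.log ((N:ℝ)+2) - Real.log (((N/6 : ℕ):ℝ)+2) := by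
  have hc : ((N/6 : ℕ):ℝ) ≤ (N:ℝ)/6 := Nat.cast_div_le
  have hNr : (90:ℝ) ≤ (N:ℝ) := by exact_mod_cast hN
  have h1 : Real.log (((N/6 : ℕ):ℝ)+2) ≤ Real.log ((N:ℝ)/6+2) :=
    Real.log_le_log (by positivity) (by linarith)
  have h2 : 1 ≤ Real.log ((N:ℝ)+2) - Real.log ((N:ℝ)/6+2) := by
    rw [← Real.log_div (by positivity) (by positivity)]
    rw [Real.le_log_iff_exp_le (by positivity)]
    have he : Real.exp 1 < 2.7182818286 := Real.exp_one_lt_d9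
    rw [le_div_iff₀ (by positivity)]
    nlinarith
  linarith

lemma theta_le : ∀ N : ℕ, theta N ≤ (6/5)*Aconst*N + 6*(Real.log ((N:ℝ)+2))^2 + 178 := by
  intro N
  induction N using Nat.strong_induction_on with
  | _ N ih =>
  have hsq : (0:ℝ) ≤ 6*(Real.log ((N:ℝ)+2))^2 := by positivity
  have hA : (0:ℝ) ≤ (6/5)*Aconst*N := by
    have := Aconst_nonneg; positivity
  rcases Nat.lt_or_ge N 90 with hsmall | hbig
  · -- base case: primorial N ≤ 4^N
    have h4 : (primorial N : ℝ) ≤ (4:ℝ)^N := by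
      exact_mod_cast _root_.primorial_le_4_pow N
    have h5 : theta N ≤ Real.log ((4:ℝ)^N) :=
      Real.log_le_log (by exact_mod_cast _root_.primorial_pos N) h4
    rw [Real.log_pow] at h5
    have h6 : Real.log 4 = 2 * Real.log 2 := by
      rw [show (4:ℝ) = 2^2 by norm_num, Real.log_pow]; push_cast; ring
    have h7 : Real.log 2 ≤ 1 := by
      rw [Real.log_le_iff_le_exp (by norm_num)]
      linarith [Real.add_one_le_exp (1:ℝ)]
    have h8 : (N:ℝ) ≤ 89 := by exact_mod_cast Nat.le_of_lt_succ (by omega)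
    have h9 : (0:ℝ) ≤ Real.log 2 := Real.log_nonneg (by norm_num)
    rw [h6] at h5
    push_cast at h5
    nlinarith [h5, hsq, hA, h8, h9, h7]
  · -- inductive step
    have hN1 : 1 ≤ N := by omega
    have hQle : Real.log (Qprod N) ≤ Real.log (Mnum N) - Real.log (Mden N) := by
      have hdvd := lemA N hN1
      have hle : (Qprod N * Mden N : ℕ) ≤ Mnum N := Nat.le_of_dvd
        (Nat.pos_of_ne_zero (Mnum_ne_zero N)) hdvd
      have hler : ((Qprod N : ℕ):ℝ) * (Mden N : ℕ) ≤ ((Mnum N : ℕ):ℝ) := by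
        exact_mod_cast hle
      have := Real.log_le_log (by
        have := Nat.pos_of_ne_zero (Qprod_ne_zero N)
        have := Nat.pos_of_ne_zero (Mden_ne_zero N)
        positivity) hler
      rw [Real.log_mul (by exact_mod_cast (Nat.pos_of_ne_zero (Qprod_ne_zero N)).ne')
        (by exact_mod_cast (Nat.pos_of_ne_zero (Mden_ne_zero N)).ne')] at this
      linarith
    have hsplit : theta N = theta (N/6) + Real.log (Qprod N) := by
      unfold theta
      rw [primorial_split N]
      push_cast
      rw [Real.log_mul (by exact_mod_cast (_root_.primorial_pos (N/6)).ne')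
        (by exact_mod_cast (Nat.pos_of_ne_zero (Qprod_ne_zero N)).ne')]
    have hih := ih (N/6) (by omega)
    have hLM := (LM_bounds N hbig).2
    have hcast : ((N/6 : ℕ):ℝ) ≤ (N:ℝ)/6 := Nat.cast_div_le
    have hlogr := log_e_ratio hbig
    -- abbreviations
    set a := Real.log ((N:ℝ)+2) with ha
    set b := Real.log (((N/6:ℕ):ℝ)+2) with hb
    have hb0 : (0:ℝ) ≤ b := by
      rw [hb]
      apply Real.log_nonneg
      have : (0:ℝ) ≤ ((N/6:ℕ):ℝ) := Nat.cast_nonneg _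
      linarith
    have ha1 : (1:ℝ) ≤ a := by linarith
    have haN : Real.log N ≤ a := by
      rw [ha]
      apply Real.log_le_log (by exact_mod_cast (by omega : 0 < N) : (0:ℝ) < (N:ℝ))
      linarith
    have hsq2 : a + b ≤ (a+b)*(a-b) := by
      nlinarith
    have hA6 : (6/5)*Aconst*((N/6:ℕ):ℝ) ≤ Aconst*(N:ℝ)/5 := by
      have := Aconst_nonneg
      nlinarith
    rw [hsplit]
    have hlogN0 : (0:ℝ) ≤ Real.log N := Real.log_nonneg (by exact_mod_cast hN1)
    nlinarith [hih, hLM, hQle, hsq2, hA6, ha1, hb0, haN, hlogN0]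

lemma theta_ge (N : ℕ) (hN : 90 ≤ N) :
    Aconst*N - 5*Real.log N - 1 - (Real.sqrt N + 1)*Real.log N ≤ theta N := by
  have hN1 : 1 ≤ N := by omega
  have hW : Wprod N ≠ 0 := Finset.prod_ne_zero_iff.2 (fun p hp =>
    pow_ne_zero _ (Nat.Prime.pos (Finset.mem_filter.1 hp).2).ne')
  have hdvd := lemB N hN1
  have hle : (Mnum N : ℕ) ≤ Mden N * Wprod N := Nat.le_of_dvd
    (Nat.pos_of_ne_zero (mul_ne_zero (Mden_ne_zero N) hW)) hdvd
  have hWle := Wprod_le N hN1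
  have hNpos : (0:ℝ) < (N:ℝ) := by exact_mod_cast (by omega : 0 < N)
  have hlogN0 : (0:ℝ) ≤ Real.log N := Real.log_nonneg (by exact_mod_cast hN1)
  -- log Mnum ≤ log Mden + log Wprod
  have h1 : Real.log (Mnum N) ≤ Real.log (Mden N) + Real.log (Wprod N) := by
    have hler : ((Mnum N : ℕ):ℝ) ≤ ((Mden N:ℕ):ℝ) * ((Wprod N:ℕ):ℝ) := by exact_mod_cast hle
    have := Real.log_le_log (by exact_mod_cast Nat.pos_of_ne_zero (Mnum_ne_zero N)) hler
    rwa [Real.log_mul (by exact_mod_cast (Nat.pos_of_ne_zero (Mden_ne_zero N)).ne')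
      (by exact_mod_cast (Nat.pos_of_ne_zero hW).ne')] at this
  -- log Wprod ≤ theta N + (sqrt N + 1) * log N
  have h2 : Real.log (Wprod N) ≤ theta N + ((Nat.sqrt N : ℝ) + 1) * Real.log N := by
    have hler : ((Wprod N : ℕ):ℝ) ≤ ((primorial N:ℕ):ℝ) * ((N:ℝ)^(Nat.sqrt N + 1)) := by
      exact_mod_cast hWle
    have h3 := Real.log_le_log (by exact_mod_cast Nat.pos_of_ne_zero hW) hler
    rw [Real.log_mul (by exact_mod_cast (_root_.primorial_pos N).ne') (by positivity),
      Real.log_pow] at h3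
    unfold theta
    push_cast at h3 ⊢
    linarith
  have hsqrt : ((Nat.sqrt N : ℝ)) ≤ Real.sqrt N := by
    have hs : ((Nat.sqrt N : ℝ))^2 ≤ (N:ℝ) := by
      have := Nat.sqrt_le' N
      exact_mod_cast this
    have := Real.sqrt_le_sqrt hs
    rwa [Real.sqrt_sq (by positivity)] at this
  have hLM := (LM_bounds N hN).1
  have h4 : ((Nat.sqrt N : ℝ) + 1) * Real.log N ≤ (Real.sqrt N + 1) * Real.log N :=
    mul_le_mul_of_nonneg_right (by linarith) hlogN0
  linarith [hLM, h1, h2, h4]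


set_option maxHeartbeats 2000000 in
/-- Key analytic result: a prime in (n, 1.41n] for large n. -/
lemma prime_in_gap (n k : ℕ) (hn : 10000000000000000 ≤ n) (hk1 : 141*n ≤ 100*k) (hk2 : k ≤ 2*n) :
    ∃ p, p.Prime ∧ n < p ∧ p ≤ k := by
  by_contra hc
  push_neg at hc
  have hnk : n ≤ k := by omega
  have hteq : theta k = theta n := theta_eq_of_no_prime hnk (fun p hp h1 h2 => by
    have := hc p hp h1; omega)
  have hk90 : 90 ≤ k := by omega
  have hlow := theta_ge k hk90
  have hupp := theta_le n
  rw [hteq] at hlow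
  -- real abbreviations
  have hnR : (10000000000000000:ℝ) ≤ (n:ℝ) := by exact_mod_cast hn
  have hk1R : (141:ℝ)*n ≤ 100*k := by exact_mod_cast hk1
  have hk2R : (k:ℝ) ≤ 2*n := by exact_mod_cast hk2
  set s := Real.sqrt ((n:ℝ)+2) with hs
  set u := Real.sqrt s with hu
  have hn2pos : (0:ℝ) < (n:ℝ)+2 := by positivity
  have hs0 : (0:ℝ) < s := Real.sqrt_pos.2 hn2pos
  have hu0 : (0:ℝ) < u := Real.sqrt_pos.2 hs0
  have hs2 : s^2 = (n:ℝ)+2 := Real.sq_sqrt hn2pos.le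
  have hu2 : u^2 = s := Real.sq_sqrt hs0.le
  have hs1 : (1:ℝ) ≤ s := by nlinarith
  have hu1 : (1:ℝ) ≤ u := by nlinarith
  set a := Real.log ((n:ℝ)+2) with ha
  have ha1 : (1:ℝ) ≤ a := by
    rw [ha, Real.le_log_iff_exp_le hn2pos]
    have := Real.exp_one_lt_d9
    nlinarith
  -- log(n+2) = 4 log u ≤ 4(u-1) ≤ 4u
  have halog : a = 4 * Real.log u := by
    rw [ha, hu, hs, Real.log_sqrt (Real.sqrt_nonneg _), Real.log_sqrt hn2pos.le]
    ring
  have hau : a ≤ 4*u := by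
    rw [halog]
    have := Real.log_le_sub_one_of_pos hu0
    linarith
  -- bounds on the k-terms
  have hkpos : (0:ℝ) < (k:ℝ) := by
    have : (0:ℕ) < k := by omega
    exact_mod_cast this
  have hklog : Real.log k ≤ 2*a := by
    have h1 : (k:ℝ) ≤ ((n:ℝ)+2)^2 := by nlinarith
    calc Real.log k ≤ Real.log (((n:ℝ)+2)^2) := Real.log_le_log hkpos h1
      _ = 2 * a := by rw [Real.log_pow, ha]; push_cast; ring
  have hksqrt : Real.sqrt k ≤ 2*s := by
    have h1 : (k:ℝ) ≤ (2*s)^2 := by nlinarith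
    have h2 := Real.sqrt_le_sqrt h1
    rwa [Real.sqrt_sq (by positivity)] at h2
  have hklog0 : (0:ℝ) ≤ Real.log k := Real.log_nonneg (by
    have : (1:ℕ) ≤ k := by omega
    exact_mod_cast this)
  have hsqrtk0 : (0:ℝ) ≤ Real.sqrt k := Real.sqrt_nonneg _
  -- combine
  have hA := Aconst_lb
  have hA0 := Aconst_nonneg
  have hchain : Aconst*(k:ℝ) - 5*Real.log k - 1 - (Real.sqrt k + 1)*Real.log k
      ≤ (6/5)*Aconst*(n:ℝ) + 6*a^2 + 178 := by
    calc Aconst*(k:ℝ) - 5*Real.log k - 1 - (Real.sqrt k + 1)*Real.log k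
        ≤ theta n := hlow
      _ ≤ (6/5)*Aconst*(n:ℝ) + 6*a^2 + 178 := hupp
  -- lower bound LHS and upper bound error terms
  have hAk : (141/100)*Aconst*(n:ℝ) ≤ Aconst*(k:ℝ) := by
    have := mul_le_mul_of_nonneg_left hk1R hA0
    linarith [this]
  have herr : 5*Real.log k + 1 + (Real.sqrt k + 1)*Real.log k + 6*a^2 + 178 ≤ 339*u^3 := by
    have e1 : (Real.sqrt k + 1)*Real.log k ≤ (2*s+1)*(2*a) :=
      mul_le_mul (by linarith) hklog (by linarith [hklog0]) (by nlinarith)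
    have e2 : a^2 ≤ (4*u)^2 := by nlinarith
    have e3 : s = u^2 := hu2.symm
    -- everything in terms of u
    have e4 : (2*s+1)*(2*a) ≤ (2*u^2+1)*(8*u) := by
      rw [e3] at *
      apply mul_le_mul (by nlinarith) (by nlinarith) (by nlinarith) (by nlinarith)
    nlinarith [hu1, hau, e1, e2, e4, hklog]
  have hfinal : (21/100)*Aconst*(n:ℝ) ≤ 339*u^3 := by linarith [hchain, herr, hAk]
  -- but n = u^4 - 2 and u ≥ 10^4 gives a contradiction
  have hun : u^4 = (n:ℝ)+2 := by nlinarith [hs2, hu2]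
  have hsbig : (100000000:ℝ) ≤ s := by
    have h1 : Real.sqrt (10000000000000000:ℝ) ≤ s := by
      rw [hs]
      exact Real.sqrt_le_sqrt (by linarith)
    have h2 : Real.sqrt (10000000000000000:ℝ) = 100000000 := by
      rw [show (10000000000000000:ℝ) = 100000000^2 by norm_num,
        Real.sqrt_sq (by norm_num)]
    linarith
  have hu4 : (10000:ℝ) ≤ u := by
    have h1 : Real.sqrt (100000000:ℝ) ≤ u := by
      rw [hu]
      exact Real.sqrt_le_sqrt (by linarith)
    have h2 : Real.sqrt (100000000:ℝ) = 10000 := by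
      rw [show (100000000:ℝ) = 10000^2 by norm_num, Real.sqrt_sq (by norm_num)]
    linarith
  have key : 10000*u^3 ≤ u^4 := by nlinarith [hu4, hu0, hu1]
  have hAn : (63/1000)*(n:ℝ) ≤ (21/100)*Aconst*(n:ℝ) := by
    have hn0 : (0:ℝ) ≤ (n:ℝ) := by positivity
    nlinarith [mul_le_mul_of_nonneg_right hA hn0]
  have hu16 : (10000000000000000:ℝ) ≤ u^4 := by linarith [hun, hnR]
  linarith [hAn, hfinal, hun, key, hu16]

/-- There are infinitely many positive integers `n` such that the `n × n`
grid does not admit a perfect game of PackIt!. -/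
theorem packit_infinitely_many_impossible :
    {n : ℕ | 0 < n ∧ IsEmpty (PerfectPackItGame n n)}.Infinite := by
  apply Set.infinite_of_forall_exists_gt
  intro a
  set j := a + 10000000000000001 with hj
  refine ⟨(pell j).1, ⟨pell_fst_pos j, ?_⟩, ?_⟩
  · -- no perfect game
    have hn16 : 10000000000000000 ≤ (pell j).1 := by
      have := pell_fst_ge j
      omega
    have h119 : 119 ≤ (pell j).1 := by omega
    obtain ⟨p, hp, hp1, hp2⟩ := prime_in_gap (pell j).1 (pell j).2 hn16
      (pell_k_lb j h119) (pell_k_ub j)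
    exact no_game (pell_tri j) hp hp1 hp2
  · have := pell_fst_ge j
    omega
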